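/- Let C be a non-trivial strongly connected component in BPA*01, let p ∈ C, and let q be a BPA*01 expression such that C·q is a strongly connected component. Then p·q is an alive exit state of C·q if and only if p is an alive exit state of C and q is normed. -/

import Mathlib

/-- BPA*01 expressions over an action set `Act`. -/
inductive BExpr (Act : Type) : Type
  | dl : BExpr Act
  | emp : BExpr Act
  | act : Act → BExpr Act
  | seq : BExpr Act → BExpr Act → BExpr Act
  | alt : BExpr Act → BExpr Act → BExpr Act
  | star : BExpr Act → BExpr Act

variable {Act : Type}

/-- The termination predicate `↓` of BPA*01. -/
inductive BTerm : BExpr Act → Prop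
  | emp : BTerm BExpr.emp
  | altl {p q : BExpr Act} : BTerm p → BTerm (BExpr.alt p q)
  | altr {p q : BExpr Act} : BTerm q → BTerm (BExpr.alt p q)
  | seq {p q : BExpr Act} : BTerm p → BTerm q → BTerm (BExpr.seq p q)
  | star {p : BExpr Act} : BTerm (BExpr.star p)

/-- The transition relation `p →a p'` of BPA*01. -/
inductive BStep : BExpr Act → Act → BExpr Act → Prop
  | act {a : Act} : BStep (BExpr.act a) a BExpr.emp
  | altl {p q p' : BExpr Act} {a : Act} : BStep p a p' → BStep (BExpr.alt p q) a p'
  | altr {p q q' : BExpr Act} {a : Act} : BStep q a q' → BStep (BExpr.alt p q) a q'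
  | seql {p q p' : BExpr Act} {a : Act} :
      BStep p a p' → BStep (BExpr.seq p q) a (BExpr.seq p' q)
  | seqr {p q q' : BExpr Act} {a : Act} :
      BTerm p → BStep q a q' → BStep (BExpr.seq p q) a q'
  | star {p p' : BExpr Act} {a : Act} :
      BStep p a p' → BStep (BExpr.star p) a (BExpr.seq p' (BExpr.star p))

/-- `p → p'`: a transition with some label. -/
def BStepAny (p q : BExpr Act) : Prop := ∃ a, BStep p a q

/-- `p →* p'`: reachability. -/
def BReach (p q : BExpr Act) : Prop := Relation.ReflTransGen BStepAny p q

/-- `p` is normed: some terminating expression is reachable from `p`. -/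
def BNormed (p : BExpr Act) : Prop := ∃ q, BReach p q ∧ BTerm q

/-- A strongly connected component: a maximal set of mutually reachable states. -/
def IsSCC (C : Set (BExpr Act)) : Prop :=
  (∀ s ∈ C, ∀ t ∈ C, BReach s t) ∧
    ∀ D : Set (BExpr Act), C ⊆ D → (∀ s ∈ D, ∀ t ∈ D, BReach s t) → D = C

/-- A trivial SCC: a singleton `{s}` with no transition `s → s`. -/
def IsTrivialSCC (C : Set (BExpr Act)) : Prop := ∃ s, C = {s} ∧ ¬ BStepAny s s

/-- `C · q = { p · q | p ∈ C }`. -/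
def seqSet (C : Set (BExpr Act)) (q : BExpr Act) : Set (BExpr Act) :=
  (fun p => BExpr.seq p q) '' C

/-- A basic SCC: `C = C' · q*` for some set `C'` that is not an SCC. -/
def IsBasic (C : Set (BExpr Act)) : Prop :=
  ∃ (C' : Set (BExpr Act)) (q : BExpr Act), C = seqSet C' (BExpr.star q) ∧ ¬ IsSCC C'

/-- The set `Extⁿ(s)` of normed exit transitions from `s`, w.r.t. the SCC `C`. -/
def ExtN (C : Set (BExpr Act)) (s : BExpr Act) : Set (Act × BExpr Act) :=
  {e | BStep s e.1 e.2 ∧ e.2 ∉ C ∧ BNormed e.2}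

/-- `s ∈ C` is an alive exit state if `s↓` or `s` has a normed exit transition. -/
def AliveExit (C : Set (BExpr Act)) (s : BExpr Act) : Prop :=
  s ∈ C ∧ (BTerm s ∨ ∃ e, e ∈ ExtN C s)

/-- `E · q = { (a, r · q) | (a, r) ∈ E }`. -/
def extSeq (E : Set (Act × BExpr Act)) (q : BExpr Act) : Set (Act × BExpr Act) :=
  (fun e => (e.1, BExpr.seq e.2 q)) '' E

/-- Is the expression a star expression? -/
def isStarB : BExpr Act → Bool
  | BExpr.star _ => true
  | _ => false

/-- The measure `OC` on BPA*01 expressions. -/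
def OC : BExpr Act → ℕ
  | BExpr.dl => 0
  | BExpr.emp => 0
  | BExpr.act _ => 1
  | BExpr.seq _ q => if isStarB q then 0 else OC q + 1
  | BExpr.alt p q => max (OC p) (OC q) + 1
  | BExpr.star _ => 1

/-!
An exit transition of `p · q` from `C · q` is either an exit transition `p →a p'` of `C`
followed by `q`, or, when `p↓`, a first step `q →a q'` of `q`. The latter always leaves `C · q`
unless `q↓`: a step from `q` to some `r · q` can only unfold a star, and stars terminate.
Normedness then transfers because `u · v` is normed iff `u` and `v` are.
-/

lemma BStep.OC_le {p p' : BExpr Act} {a : Act} (h : BStep p a p') : OC p' ≤ OC p := by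
  induction h with
  | act | seql | star => simp [OC, isStarB]
  | altl _ ih | altr _ ih => simp only [OC]; omega
  | @seqr _ q _ _ _ hq ih =>
    cases hqs : isStarB q
    · simp only [OC, hqs, Bool.false_eq_true, if_false]; omega
    · cases q <;> simp only [isStarB, reduceCtorEq] at hqs
      cases hq
      simp [OC, isStarB]

/-- Steps never increase `OC`, while `OC (r · q) = OC q + 1` unless `q` is a star. -/
lemma BStep.isStarB_of_seq_self {q r : BExpr Act} {a : Act} (h : BStep q a (BExpr.seq r q)) :
    isStarB q = true := by
  have hle := h.OC_le
  by_contra hq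
  simp only [OC, hq, if_false] at hle
  omega

lemma BTerm.of_isStarB {q : BExpr Act} (h : isStarB q = true) : BTerm q := by
  cases q <;> first | exact BTerm.star | simp [isStarB] at h

lemma BStep.not_mem_seqSet {q q' : BExpr Act} {a : Act} (h : BStep q a q') (hq : ¬ BTerm q)
    (C : Set (BExpr Act)) : q' ∉ seqSet C q := by
  rintro ⟨r, -, rfl⟩
  exact hq (BTerm.of_isStarB h.isStarB_of_seq_self)

lemma seq_mem_seqSet_iff {C : Set (BExpr Act)} {p q : BExpr Act} :
    BExpr.seq p q ∈ seqSet C q ↔ p ∈ C :=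
  Function.Injective.mem_set_image fun _ _ h => (BExpr.seq.inj h).1

lemma BReach.seq_left {u u' : BExpr Act} (h : BReach u u') (v : BExpr Act) :
    BReach (BExpr.seq u v) (BExpr.seq u' v) := by
  induction h with
  | refl => exact .refl
  | tail _ hs ih => obtain ⟨a, hs⟩ := hs; exact ih.tail ⟨a, .seql hs⟩

lemma BNormed.of_reach {p p' : BExpr Act} (h : BReach p p') (h' : BNormed p') : BNormed p :=
  let ⟨r, hr, ht⟩ := h'
  ⟨r, h.trans hr, ht⟩

lemma BNormed.of_step {p p' : BExpr Act} {a : Act} (h : BStep p a p') (h' : BNormed p') :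
    BNormed p :=
  .of_reach (.single ⟨a, h⟩) h'

lemma BNormed.of_term {p : BExpr Act} (h : BTerm p) : BNormed p := ⟨p, .refl, h⟩

lemma BNormed.exists_step {q : BExpr Act} (hq : BNormed q) (hnt : ¬ BTerm q) :
    ∃ a q', BStep q a q' ∧ BNormed q' := by
  obtain ⟨r, hqr, hr⟩ := hq
  rcases hqr.cases_head with rfl | ⟨q', ⟨a, hs⟩, hrest⟩
  · exact absurd hr hnt
  · exact ⟨a, q', hs, r, hrest, hr⟩

lemma BNormed.seq {u v : BExpr Act} (hu : BNormed u) (hv : BNormed v) :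
    BNormed (BExpr.seq u v) := by
  obtain ⟨t, hut, ht⟩ := hu
  refine .of_reach (hut.seq_left v) ?_
  by_cases hvt : BTerm v
  · exact .of_term (.seq ht hvt)
  · obtain ⟨a, v', hs, hv'⟩ := hv.exists_step hvt
    exact .of_step (.seqr ht hs) hv'

lemma BNormed.of_seq {u v : BExpr Act} (h : BNormed (BExpr.seq u v)) :
    BNormed u ∧ BNormed v := by
  obtain ⟨r, hr, hrt⟩ := h
  generalize hs : BExpr.seq u v = s at hr
  induction hr using Relation.ReflTransGen.head_induction_on generalizing u with
  | refl =>
    subst hs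
    cases hrt with
    | seq hu hv => exact ⟨.of_term hu, .of_term hv⟩
  | head hstep hrest ih =>
    subst hs
    obtain ⟨a, hstep⟩ := hstep
    cases hstep with
    | seql hu => exact (ih rfl).imp_left (.of_step hu)
    | seqr hu hv => exact ⟨.of_term hu, .of_step hv ⟨r, hrest, hrt⟩⟩

lemma AliveExit.of_seq {C : Set (BExpr Act)} {p q : BExpr Act}
    (h : AliveExit (seqSet C q) (BExpr.seq p q)) : AliveExit C p ∧ BNormed q := by
  obtain ⟨hp, hterm | ⟨⟨a, s⟩, hstep, hout, hnorm⟩⟩ := h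
  all_goals rw [seq_mem_seqSet_iff] at hp
  · cases hterm with
    | seq hpt hqt => exact ⟨⟨hp, .inl hpt⟩, .of_term hqt⟩
  · cases hstep with
    | @seql _ _ p' _ hstep =>
      obtain ⟨hp', hq⟩ := hnorm.of_seq
      exact ⟨⟨hp, .inr ⟨(a, p'), hstep, mt seq_mem_seqSet_iff.2 hout, hp'⟩⟩, hq⟩
    | seqr hpt hstep => exact ⟨⟨hp, .inl hpt⟩, .of_step hstep hnorm⟩

lemma AliveExit.seq {C : Set (BExpr Act)} {p q : BExpr Act} (h : AliveExit C p)
    (hq : BNormed q) : AliveExit (seqSet C q) (BExpr.seq p q) := by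
  obtain ⟨hp, hpt | ⟨⟨a, p'⟩, hstep, hout, hp'⟩⟩ := h
  all_goals refine ⟨seq_mem_seqSet_iff.2 hp, ?_⟩
  · by_cases hqt : BTerm q
    · exact .inl (.seq hpt hqt)
    · obtain ⟨a, q', hs, hq'⟩ := hq.exists_step hqt
      exact .inr ⟨(a, q'), .seqr hpt hs, hs.not_mem_seqSet hqt C, hq'⟩
  · exact .inr ⟨(a, .seq p' q), .seql hstep, mt seq_mem_seqSet_iff.1 hout, hp'.seq hq⟩

theorem seq_alive_exit_general {Act : Type} {C : Set (BExpr Act)}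
    {p : BExpr Act} {q : BExpr Act} :
    AliveExit (seqSet C q) (BExpr.seq p q) ↔ AliveExit C p ∧ BNormed q :=
  ⟨AliveExit.of_seq, fun h => h.1.seq h.2⟩

/-- Let `C` be a non-trivial SCC in BPA*01, `p ∈ C`, and `q` such
that `C · q` is an SCC. Then `p · q` is an alive exit state of `C · q` iff `p`
is an alive exit state of `C` and `q` is normed. -/
theorem seq_alive_exit {Act : Type} [Nonempty Act] {C : Set (BExpr Act)}
    (hC : IsSCC C) (hnt : ¬ IsTrivialSCC C)
    {p : BExpr Act} (hp : p ∈ C) {q : BExpr Act} (hCq : IsSCC (seqSet C q)) :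
    AliveExit (seqSet C q) (BExpr.seq p q) ↔ AliveExit C p ∧ BNormed q :=
  seq_alive_exit_general
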